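/- Let Z = ∂/∂z + i z̄ ∂/∂u and let c > 0 be a constant. For (z,u) ≠ (0,0), the function G(z,u) = c·(|z|⁴ + u²)^{−1/2} satisfies Z Z (log G) − 2 (Z log G)² = 0. -/

import Mathlib

open Complex

/-- The CR vector field Z = ∂/∂z + i z̄ ∂/∂u on the Heisenberg group ℂ × ℝ,
where ∂/∂z = ½(∂/∂x − i ∂/∂y) is the Wirtinger derivative. -/
noncomputable def Zop (f : ℂ × ℝ → ℂ) : ℂ × ℝ → ℂ := fun p =>
  (1 / 2 : ℂ) * (fderiv ℝ f p (1, 0) - Complex.I * fderiv ℝ f p (Complex.I, 0))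
    + Complex.I * (starRingEnd ℂ p.1) * fderiv ℝ f p (0, 1)

/-- The CR vector field Z̄ = ∂/∂z̄ − i z ∂/∂u on the Heisenberg group ℂ × ℝ,
where ∂/∂z̄ = ½(∂/∂x + i ∂/∂y). -/
noncomputable def Zbar (f : ℂ × ℝ → ℂ) : ℂ × ℝ → ℂ := fun p =>
  (1 / 2 : ℂ) * (fderiv ℝ f p (1, 0) + Complex.I * fderiv ℝ f p (Complex.I, 0))
    - Complex.I * p.1 * fderiv ℝ f p (0, 1)

/-- The vector field T = ∂/∂u. -/
noncomputable def Tder (f : ℂ × ℝ → ℂ) : ℂ × ℝ → ℂ := fun p => fderiv ℝ f p (0, 1)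

/-- The sublaplacian Δ_b = Z Z̄ + Z̄ Z. -/
noncomputable def Lapb (f : ℂ × ℝ → ℂ) : ℂ × ℝ → ℂ := fun p =>
  Zop (Zbar f) p + Zbar (Zop f) p

/-!
With `Φ = |z|² - i u` one has `|Φ|² = |z|⁴ + u²`, and the CR field `Z` is a derivation with
`Z z̄ = 0`, `Z Φ = 2 z̄`, `Z Φ̄ = 0`. Hence `Z log G = -½ Z log (Φ Φ̄) = -z̄ / Φ`, and then
`Z (-z̄ / Φ) = 2 z̄² / Φ² = 2 (Z log G)²`.
-/

open ComplexConjugate Topology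

/-- `Z` evaluated on a real differential; its `ℂ`-linearity makes `Zop` a derivation. -/
noncomputable def ZopOfFDeriv (p : ℂ × ℝ) : ((ℂ × ℝ) →L[ℝ] ℂ) →ₗ[ℂ] ℂ where
  toFun L := (1 / 2 : ℂ) * (L (1, 0) - I * L (I, 0)) + I * conj p.1 * L (0, 1)
  map_add' _ _ := by simp only [FunLike.coe_add, Pi.add_apply]; ring
  map_smul' _ _ := by
    simp only [FunLike.coe_smul, Pi.smul_apply, smul_eq_mul, RingHom.id_apply]; ring

section
variable {f g : ℂ × ℝ → ℂ} {p : ℂ × ℝ}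

theorem HasFDerivAt.Zop_eq {L : (ℂ × ℝ) →L[ℝ] ℂ} (h : HasFDerivAt f L p) :
    Zop f p = ZopOfFDeriv p L := by
  rw [Zop, h.fderiv]; rfl

theorem Filter.EventuallyEq.Zop_eq (h : f =ᶠ[𝓝 p] g) : Zop f p = Zop g p := by
  simp only [Zop, h.fderiv_eq]

theorem Zop_add (hf : DifferentiableAt ℝ f p) (hg : DifferentiableAt ℝ g p) :
    Zop (fun q => f q + g q) p = Zop f p + Zop g p :=
  (hf.hasFDerivAt.add hg.hasFDerivAt).Zop_eq.trans <| by
    rw [map_add, hf.hasFDerivAt.Zop_eq, hg.hasFDerivAt.Zop_eq]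

theorem Zop_sub (hf : DifferentiableAt ℝ f p) (hg : DifferentiableAt ℝ g p) :
    Zop (fun q => f q - g q) p = Zop f p - Zop g p :=
  (hf.hasFDerivAt.sub hg.hasFDerivAt).Zop_eq.trans <| by
    rw [map_sub, hf.hasFDerivAt.Zop_eq, hg.hasFDerivAt.Zop_eq]

theorem Zop_mul (hf : DifferentiableAt ℝ f p) (hg : DifferentiableAt ℝ g p) :
    Zop (fun q => f q * g q) p = f p * Zop g p + g p * Zop f p :=
  (hf.hasFDerivAt.mul hg.hasFDerivAt).Zop_eq.trans <| by
    rw [map_add, map_smul, map_smul, hf.hasFDerivAt.Zop_eq, hg.hasFDerivAt.Zop_eq, smul_eq_mul,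
      smul_eq_mul]

theorem Zop_const_mul (a : ℂ) (hf : DifferentiableAt ℝ f p) :
    Zop (fun q => a * f q) p = a * Zop f p :=
  (hf.hasFDerivAt.const_mul a).Zop_eq.trans <| by
    rw [map_smul, hf.hasFDerivAt.Zop_eq, smul_eq_mul]

theorem Zop_comp {h : ℂ → ℂ} {h' : ℂ} (hh : HasDerivAt h h' (f p))
    (hf : DifferentiableAt ℝ f p) : Zop (fun q => h (f q)) p = h' * Zop f p :=
  (hh.comp_hasFDerivAt p hf.hasFDerivAt).Zop_eq.trans <| by
    rw [map_smul, hf.hasFDerivAt.Zop_eq, smul_eq_mul]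

theorem Zop_div (hf : DifferentiableAt ℝ f p) (hg : DifferentiableAt ℝ g p) (hg0 : g p ≠ 0) :
    Zop (fun q => f q / g q) p = (Zop f p * g p - f p * Zop g p) / g p ^ 2 := by
  simp only [div_eq_mul_inv]
  rw [Zop_mul (g := fun q => (g q)⁻¹) hf (hg.inv hg0), Zop_comp (f := g) (hasDerivAt_inv hg0) hg]
  field_simp
  ring

theorem Zop_ofReal_comp {N : ℂ × ℝ → ℝ} {h : ℝ → ℝ} {h' : ℝ} (hh : HasDerivAt h h' (N p))
    (hN : DifferentiableAt ℝ N p) :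
    Zop (fun q => (h (N q) : ℂ)) p = h' * Zop (fun q => (N q : ℂ)) p := by
  have hN' := hN.hasFDerivAt
  refine (ofRealCLM.hasFDerivAt.comp p (hh.comp_hasFDerivAt p hN')).Zop_eq.trans ?_
  rw [(ofRealCLM.hasFDerivAt.comp p hN').Zop_eq (f := fun q => (N q : ℂ)), ← smul_eq_mul,
    ← map_smul]
  congr 1
  ext v <;> simp

theorem Zop_fst : Zop (fun q => q.1) p = 1 :=
  hasFDerivAt_fst.Zop_eq.trans <| by norm_num [ZopOfFDeriv]

theorem Zop_conj_fst : Zop (fun q => conj q.1) p = 0 :=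
  ((conjCLE : ℂ ≃L[ℝ] ℂ).toContinuousLinearMap.comp
    (ContinuousLinearMap.fst ℝ ℂ ℝ)).hasFDerivAt.Zop_eq.trans <| by simp [ZopOfFDeriv]

theorem Zop_ofReal_snd : Zop (fun q => (q.2 : ℂ)) p = I * conj p.1 :=
  (ofRealCLM.comp (ContinuousLinearMap.snd ℝ ℂ ℝ)).hasFDerivAt.Zop_eq.trans <| by
    simp [ZopOfFDeriv]

end

def complexGauge (q : ℂ × ℝ) : ℂ := q.1 * conj q.1 - I * q.2

section
variable {p : ℂ × ℝ}

theorem differentiableAt_complexGauge : DifferentiableAt ℝ complexGauge p := by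
  unfold complexGauge; fun_prop

theorem complexGauge_re (q : ℂ × ℝ) : (complexGauge q).re = normSq q.1 := by
  simp [complexGauge, mul_conj]

theorem complexGauge_im (q : ℂ × ℝ) : (complexGauge q).im = -q.2 := by
  simp [complexGauge, mul_conj]

theorem normSq_complexGauge (q : ℂ × ℝ) : normSq (complexGauge q) = ‖q.1‖ ^ 4 + q.2 ^ 2 := by
  rw [normSq_apply, complexGauge_re, complexGauge_im, normSq_eq_norm_sq]
  ring

theorem ofReal_norm_pow_four_add_sq (q : ℂ × ℝ) :
    ((‖q.1‖ ^ 4 + q.2 ^ 2 : ℝ) : ℂ) = complexGauge q * conj (complexGauge q) := by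
  rw [← normSq_complexGauge, mul_conj]

theorem norm_pow_four_add_sq_pos (hp : p ≠ 0) : 0 < ‖p.1‖ ^ 4 + p.2 ^ 2 := by
  have h : p.1 ≠ 0 ∨ p.2 ≠ 0 := by
    contrapose! hp
    exact Prod.ext hp.1 hp.2
  rcases h with h | h
  · have := norm_pos_iff.mpr h
    positivity
  · positivity

theorem complexGauge_ne_zero (hp : p ≠ 0) : complexGauge p ≠ 0 :=
  normSq_pos.mp (normSq_complexGauge p ▸ norm_pow_four_add_sq_pos hp)

theorem Zop_complexGauge : Zop complexGauge p = 2 * conj p.1 := by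
  unfold complexGauge
  rw [Zop_sub (by fun_prop) (by fun_prop), Zop_mul (by fun_prop) (by fun_prop),
    Zop_const_mul _ (by fun_prop), Zop_fst, Zop_conj_fst, Zop_ofReal_snd]
  linear_combination -conj p.1 * I_mul_I

theorem Zop_conj_complexGauge : Zop (fun q => conj (complexGauge q)) p = 0 := by
  have h : (fun q => conj (complexGauge q)) = fun q => conj q.1 * q.1 + I * q.2 := by
    ext q
    simp [complexGauge, mul_comm]
  rw [h, Zop_add (by fun_prop) (by fun_prop), Zop_mul (by fun_prop) (by fun_prop),
    Zop_const_mul _ (by fun_prop), Zop_fst, Zop_conj_fst, Zop_ofReal_snd]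
  linear_combination conj p.1 * I_mul_I

theorem differentiableAt_norm_pow_four_add_sq :
    DifferentiableAt ℝ (fun q : ℂ × ℝ => ‖q.1‖ ^ 4 + q.2 ^ 2) p := by
  simp only [show ∀ z : ℂ, ‖z‖ ^ 4 = (‖z‖ ^ 2) ^ 2 from fun z => by ring]
  exact ((differentiableAt_fst.norm_sq ℝ).pow 2).add (differentiableAt_snd.pow 2)

theorem Zop_ofReal_norm_pow_four_add_sq :
    Zop (fun q => ((‖q.1‖ ^ 4 + q.2 ^ 2 : ℝ) : ℂ)) p = 2 * conj p.1 * conj (complexGauge p) := by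
  simp only [ofReal_norm_pow_four_add_sq]
  rw [Zop_mul (g := fun q => conj (complexGauge q)) differentiableAt_complexGauge
      differentiableAt_complexGauge.star,
    Zop_complexGauge, Zop_conj_complexGauge]
  ring

end

theorem Real.hasDerivAt_log_const_mul_rpow {c t : ℝ} (r : ℝ) (hc : c ≠ 0) (ht : 0 < t) :
    HasDerivAt (fun s => Real.log (c * s ^ r)) (r / t) t := by
  have h : (fun s => Real.log c + r * Real.log s) =ᶠ[𝓝 t] fun s => Real.log (c * s ^ r) := by
    filter_upwards [Ioi_mem_nhds ht] with s hs
    rw [Real.log_mul hc (Real.rpow_pos_of_pos hs r).ne', Real.log_rpow hs]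
  simpa [div_eq_mul_inv] using
    (((Real.hasDerivAt_log ht.ne').const_mul r).const_add (Real.log c)).congr_of_eventuallyEq h.symm

theorem Zop_log_const_mul_rpow {c : ℝ} (r : ℝ) (hc : c ≠ 0) {p : ℂ × ℝ} (hp : p ≠ 0) :
    Zop (fun q => (Real.log (c * (‖q.1‖ ^ 4 + q.2 ^ 2) ^ r) : ℂ)) p
      = 2 * r * (conj p.1 / complexGauge p) := by
  have hΦ := complexGauge_ne_zero hp
  have hΦ' : conj (complexGauge p) ≠ 0 := (map_ne_zero _).mpr hΦ
  rw [Zop_ofReal_comp (Real.hasDerivAt_log_const_mul_rpow r hc (norm_pow_four_add_sq_pos hp))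
    differentiableAt_norm_pow_four_add_sq, Zop_ofReal_norm_pow_four_add_sq, ofReal_div,
    ofReal_norm_pow_four_add_sq]
  field_simp

theorem Zop_conj_div_complexGauge {p : ℂ × ℝ} (hp : p ≠ 0) :
    Zop (fun q => conj q.1 / complexGauge q) p = -2 * (conj p.1 / complexGauge p) ^ 2 := by
  rw [Zop_div (by fun_prop) differentiableAt_complexGauge (complexGauge_ne_zero hp),
    Zop_conj_fst, Zop_complexGauge]
  ring

/-- For G = c ρ^{-2}, c > 0, away from the origin: Z Z (log G) − 2 (Z log G)² = 0. -/
theorem torsion_identity_green (c : ℝ) (hc : 0 < c) (p : ℂ × ℝ) (hp : p ≠ 0) :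
    Zop (Zop (fun q =>
        ((Real.log (c * (‖q.1‖ ^ 4 + q.2 ^ 2) ^ (-(1 : ℝ) / 2)) : ℝ) : ℂ))) p
      - 2 * (Zop (fun q =>
        ((Real.log (c * (‖q.1‖ ^ 4 + q.2 ^ 2) ^ (-(1 : ℝ) / 2)) : ℝ) : ℂ)) p) ^ 2
      = 0 := by
  have hZ : Zop (fun q => ((Real.log (c * (‖q.1‖ ^ 4 + q.2 ^ 2) ^ (-(1 : ℝ) / 2)) : ℝ) : ℂ))
      =ᶠ[𝓝 p] fun q => 2 * ((-(1 : ℝ) / 2 : ℝ) : ℂ) * (conj q.1 / complexGauge q) := by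
    filter_upwards [isOpen_ne.mem_nhds hp] with q hq using Zop_log_const_mul_rpow _ hc.ne' hq
  have hw : DifferentiableAt ℝ (fun q => conj q.1 / complexGauge q) p := by
    simp only [div_eq_mul_inv]
    exact differentiableAt_fst.star.fun_mul
      (differentiableAt_complexGauge.fun_inv (complexGauge_ne_zero hp))
  rw [hZ.Zop_eq, Zop_const_mul _ hw, Zop_conj_div_complexGauge hp,
    Zop_log_const_mul_rpow _ hc.ne' hp]
  -- with `w = z̄ / Φ`: `2r · (-2w²) - 2 (2r w)² = -4r (1 + 2r) w²`, zero exactly for `r = -1/2`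
  push_cast
  ring
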